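/- arXiv:1408.5836 — 2 statements merged into one kernel-verified Lean document; each statement's English description precedes it below -/
import Mathlib

section
/- Let m and n be coprime integers with 0 < m < n, let μ ∈ ℤ^n be dominant, and set η = μ + χ_{m,n} ∈ ℤ^n (that is, η_i = μ_i + ⌊im/n⌋ − ⌊(i−1)m/n⌋ for i ∈ {1,…,n}). Then there is a unique weakly decreasing vector ν ∈ ℚ^n with Σ_{j=1}^n ν_j = Σ_{j=1}^n η_j, with Σ_{j=1}^k ν_j ≥ Σ_{j=1}^k η_j for all k ∈ {1,…,n}, and with Σ_{j=1}^k ν_j = Σ_{j=1}^k η_j for every k ∈ {1,…,n−1} such that ν_k > ν_{k+1} (this ν is the slope sequence of the upper convex hull of the points (k, Σ_{j≤k} η_j), k = 0,…,n). Moreover ν belongs to B(μ,m,n), and every v ∈ B(μ,m,n) satisfies Σ_{j=1}^k v_j ≤ Σ_{j=1}^k ν_j for all k; that is, ν is the greatest element of B(μ,m,n). -/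
/-!
Partial sums of an antitone vector form a concave polygon whose corners sit at its descents.
Hence, to compare the partial sums of `v` with those of an antitone `u`, it suffices to compare
them at the descents of `v` and at `n`: at the first point where `psum v - psum u` is maximal,
`v` exceeds `u` just before and not just after, so `v` descends there.
The slope sequence of `η` is built greedily: its first segment runs to a point of maximal
average slope, and the rest is the slope sequence of what remains.
-/

/-- `psum v k` is the partial sum `v₁ + ⋯ + v_k` of the first `k` entries of `v`
(1-indexed; the entry `v_j` for `j ∈ {1,…,n}` is `v ⟨j-1,_⟩`). -/
def psum {n : ℕ} (v : Fin n → ℚ) (k : ℕ) : ℚ :=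
  ∑ j ∈ Finset.univ.filter (fun j : Fin n => (j : ℕ) < k), v j

/-- `chi m n i = ⌊im/n⌋ − ⌊(i−1)m/n⌋` (floor division over `ℤ`). -/
def chi (m n : ℕ) (i : ℤ) : ℤ := Int.fdiv (i * m) n - Int.fdiv ((i - 1) * m) n

/-- The set `B(μ, m, n)`: dominant (weakly decreasing) vectors `v ∈ ℚⁿ` such that
`Σ_{j=1}^n v_j = Σ_{j=1}^n μ_j + m`, `Σ_{j=1}^k v_j ≤ Σ_{j=1}^k μ_j + km/n` for all
`k ∈ {1,…,n-1}`, and `Σ_{j=1}^k v_j ∈ ℤ` for every `k ∈ {1,…,n-1}` with `v_k > v_{k+1}`. -/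
def Bset (m n : ℕ) (μ : Fin n → ℤ) : Set (Fin n → ℚ) :=
  {v | Antitone v ∧
    psum v n = psum (fun i => (μ i : ℚ)) n + (m : ℚ) ∧
    (∀ k : ℕ, 1 ≤ k → k ≤ n - 1 →
      psum v k ≤ psum (fun i => (μ i : ℚ)) k + ((k : ℚ) * (m : ℚ)) / (n : ℚ)) ∧
    (∀ j : Fin n, ∀ h : (j : ℕ) + 1 < n,
      v ⟨(j : ℕ) + 1, h⟩ < v j → ∃ z : ℤ, psum v ((j : ℕ) + 1) = (z : ℚ))}

/-- `ν` is the slope sequence of the upper convex hull of the points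
`(k, Σ_{j≤k} η_j)`: it is weakly decreasing, has the same total sum as `η`, its partial
sums dominate those of `η`, and its partial sums agree with those of `η` at every strict
descent `ν_k > ν_{k+1}` (`k ∈ {1,…,n-1}`). -/
def IsSlopeSeq {n : ℕ} (η ν : Fin n → ℚ) : Prop :=
  Antitone ν ∧ psum ν n = psum η n ∧
  (∀ k : ℕ, k ≤ n → psum η k ≤ psum ν k) ∧
  (∀ j : Fin n, ∀ h : (j : ℕ) + 1 < n,
    ν ⟨(j : ℕ) + 1, h⟩ < ν j → psum ν ((j : ℕ) + 1) = psum η ((j : ℕ) + 1))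

open Finset

lemma psum_zero {n : ℕ} (v : Fin n → ℚ) : psum v 0 = 0 := by
  simp [psum]

lemma psum_succ {n : ℕ} (v : Fin n → ℚ) {k : ℕ} (hk : k < n) :
    psum v (k + 1) = psum v k + v ⟨k, hk⟩ := by
  have : univ.filter (fun j : Fin n => (j : ℕ) < k + 1)
      = insert ⟨k, hk⟩ (univ.filter (fun j : Fin n => (j : ℕ) < k)) := by
    ext j; simp [Fin.ext_iff]; omega
  rw [psum, this, sum_insert (by simp), add_comm, psum]

lemma psum_add {n : ℕ} (f g : Fin n → ℚ) (k : ℕ) :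
    psum (fun i => f i + g i) k = psum f k + psum g k :=
  sum_add_distrib

lemma psum_natCast_eq_sum_range {n : ℕ} (w : ℕ → ℚ) {k : ℕ} (hk : k ≤ n) :
    psum (fun j : Fin n => w j) k = ∑ i ∈ range k, w i := by
  induction k with
  | zero => simp [psum_zero]
  | succ k ih => rw [psum_succ _ hk, sum_range_succ, ih (by omega)]

lemma exists_psum_intCast_eq {n : ℕ} (a : Fin n → ℤ) (k : ℕ) :
    ∃ z : ℤ, psum (fun i => (a i : ℚ)) k = z :=
  ⟨_, (Int.cast_sum _ _).symm⟩

lemma eq_of_psum_eq {n : ℕ} {u v : Fin n → ℚ} (h : ∀ k ≤ n, psum u k = psum v k) : u = v := by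
  funext j
  have := h (j + 1) j.isLt
  rw [psum_succ _ j.isLt, psum_succ _ j.isLt, h j j.isLt.le] at this
  simpa using this

theorem psum_le_of_descents {n : ℕ} {v u : Fin n → ℚ} (hu : Antitone u)
    (htot : psum v n ≤ psum u n)
    (hdesc : ∀ j : Fin n, ∀ h : (j : ℕ) + 1 < n,
      v ⟨(j : ℕ) + 1, h⟩ < v j → psum v ((j : ℕ) + 1) ≤ psum u ((j : ℕ) + 1)) :
    ∀ k ≤ n, psum v k ≤ psum u k := by
  by_contra! hbad
  obtain ⟨k₀, hk₀n, hk₀⟩ := hbad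
  set D : ℕ → ℚ := fun k => psum v k - psum u k with hD
  have hmax : ∃ k, k ≤ n ∧ ∀ i ≤ n, D i ≤ D k := by
    obtain ⟨k, hk, hkmax⟩ := (range (n + 1)).exists_max_image D ⟨0, by simp⟩
    exact ⟨k, by simpa [Nat.lt_succ_iff] using hk,
      fun i hi => hkmax i (by simpa [Nat.lt_succ_iff] using hi)⟩
  classical
  obtain ⟨hkn, hkmax⟩ := Nat.find_spec hmax
  have hmin : ∀ i < Nat.find hmax, ¬(i ≤ n ∧ ∀ l ≤ n, D l ≤ D i) := fun i => Nat.find_min hmax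
  generalize Nat.find hmax = k at hkn hkmax hmin
  have hpos : 0 < D k := lt_of_lt_of_le (by simp only [hD]; linarith) (hkmax k₀ hk₀n)
  obtain ⟨j, rfl⟩ : ∃ j, k = j + 1 :=
    Nat.exists_eq_succ_of_ne_zero fun h => by simp [hD, h, psum_zero] at hpos
  have hjn : j + 1 < n := by
    refine lt_of_le_of_ne hkn fun h => ?_
    have : D n ≤ 0 := by simp only [hD]; linarith
    rw [← h] at this; linarith
  have hrise : D j < D (j + 1) := by
    have := hmin j (by omega)
    push Not at this
    obtain ⟨i, hi, hlt⟩ := this (by omega)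
    exact hlt.trans_le (hkmax i hi)
  have hfall : D (j + 2) ≤ D (j + 1) := hkmax _ hjn
  simp only [hD, psum_succ _ hjn, psum_succ _ (show j < n by omega)] at hrise hfall
  have hvu : v ⟨j + 1, hjn⟩ < v ⟨j, by omega⟩ := by
    have := hu (show (⟨j, by omega⟩ : Fin n) ≤ ⟨j + 1, hjn⟩ from Fin.mk_le_mk.2 (by omega))
    linarith
  have := hdesc ⟨j, by omega⟩ hjn hvu
  simp only [hD] at hpos
  linarith

/-- `IsSlopeSeq` for the partial-sum function `F`, indexed by `ℕ` so that `n` can vary. -/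
def IsHullSlopes (F : ℕ → ℚ) (n : ℕ) (w : ℕ → ℚ) : Prop :=
  AntitoneOn w (Set.Iio n) ∧ (∀ k ≤ n, F k ≤ ∑ i ∈ range k, w i) ∧
    ∑ i ∈ range n, w i = F n ∧
    ∀ k, k + 1 < n → w (k + 1) < w k → ∑ i ∈ range (k + 1), w i = F (k + 1)

lemma sum_range_ite_lt_of_le {b k : ℕ} (s : ℚ) (w : ℕ → ℚ) (hk : k ≤ b) :
    ∑ i ∈ range k, (if i < b then s else w (i - b)) = k * s := by
  rw [sum_congr rfl fun i hi => if_pos ((mem_range.1 hi).trans_le hk)]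
  simp

lemma sum_range_add_ite_lt (b k : ℕ) (s : ℚ) (w : ℕ → ℚ) :
    ∑ i ∈ range (b + k), (if i < b then s else w (i - b)) = b * s + ∑ i ∈ range k, w i := by
  rw [sum_range_add, sum_range_ite_lt_of_le s w le_rfl]
  simp

lemma IsHullSlopes.prepend {F : ℕ → ℚ} {b r : ℕ} {s : ℚ} {w : ℕ → ℚ}
    (hw : IsHullSlopes (fun k => F (b + k) - F b) r w) (hFb : F b = b * s)
    (hle : ∀ k ≤ b, F k ≤ k * s) (hws : ∀ i < r, w i ≤ s) :
    IsHullSlopes F (b + r) (fun i => if i < b then s else w (i - b)) := by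
  obtain ⟨hanti, hge, htot, hdesc⟩ := hw
  refine ⟨?_, fun k hk => ?_, ?_, fun k hk hlt => ?_⟩
  · intro i hi j hj hij
    simp only [Set.mem_Iio] at hi hj
    by_cases hjb : j < b
    · simp [hjb, hij.trans_lt hjb]
    by_cases hib : i < b
    · simpa [hib, hjb] using hws (j - b) (by omega)
    · simpa [hib, hjb] using hanti (show i - b < r by omega) (show j - b < r by omega) (by omega)
  · rcases le_or_gt k b with hkb | hkb
    · rw [sum_range_ite_lt_of_le s w hkb]
      exact hle k hkb
    · obtain ⟨t, rfl⟩ := Nat.exists_eq_add_of_le hkb.le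
      rw [sum_range_add_ite_lt, ← hFb]
      linarith [hge t (by omega)]
  · rw [sum_range_add_ite_lt, htot, hFb]
    ring
  · rcases lt_trichotomy (k + 1) b with hkb | hkb | hkb
    · simp [hkb, show k < b by omega] at hlt
    · rw [hkb, sum_range_ite_lt_of_le s w le_rfl, hFb]
    · obtain ⟨t, rfl⟩ := Nat.exists_eq_add_of_le (show b ≤ k by omega)
      have hlt' : w (t + 1) < w t := by
        simpa [show ¬b + t + 1 < b by omega, show b + t + 1 - b = t + 1 by omega] using hlt
      rw [show b + t + 1 = b + (t + 1) by ring, sum_range_add_ite_lt,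
        hdesc t (by omega) hlt', hFb]
      ring

/-- The touching point `d` of the first segment is what makes the glued slopes antitone in the
induction step. -/
theorem exists_isHullSlopes (n : ℕ) (F : ℕ → ℚ) (hF : F 0 = 0) :
    ∃ w, IsHullSlopes F n w ∧ (0 < n → ∃ d, 0 < d ∧ d ≤ n ∧ F d = d * w 0) := by
  induction n using Nat.strong_induction_on generalizing F with
  | _ n ih =>
  rcases Nat.eq_zero_or_pos n with rfl | hn
  · exact ⟨0, ⟨fun _ h => by simp at h, by simp [hF], by simp [hF], by simp⟩, by simp⟩
  obtain ⟨b, hb, hbmax⟩ := (Icc 1 n).exists_max_image (fun k => F k / k) ⟨1, by simp; omega⟩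
  obtain ⟨hb1, hbn⟩ := mem_Icc.1 hb
  set s := F b / b
  have hbpos : (0 : ℚ) < b := by exact_mod_cast hb1
  have hFb : F b = b * s := (mul_div_cancel₀ _ hbpos.ne').symm
  have hle : ∀ k ≤ n, F k ≤ k * s := by
    intro k hk
    rcases Nat.eq_zero_or_pos k with rfl | hk1
    · simp [hF]
    have := hbmax k (mem_Icc.2 ⟨hk1, hk⟩)
    rwa [div_le_iff₀ (by exact_mod_cast hk1), mul_comm] at this
  obtain ⟨r, rfl⟩ := Nat.exists_eq_add_of_le hbn
  obtain ⟨w, hw, hd⟩ := ih r (by omega) (fun k => F (b + k) - F b) (by simp)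
  have hws : ∀ i < r, w i ≤ s := by
    intro i hi
    obtain ⟨d, hd0, hdr, hFd⟩ := hd (by omega)
    have hw0 : w 0 ≤ s := by
      have := hle (b + d) (by omega)
      push_cast at this
      have hdpos : (0 : ℚ) < d := by exact_mod_cast hd0
      nlinarith
    exact (hw.1 (show 0 < r by omega) hi (Nat.zero_le i)).trans hw0
  refine ⟨_, hw.prepend hFb (fun k hk => hle k (by omega)) hws, fun _ => ⟨b, hb1, le_self_add, ?_⟩⟩
  simpa [show 0 < b by omega] using hFb

lemma IsHullSlopes.isSlopeSeq {n : ℕ} {η : Fin n → ℚ} {w : ℕ → ℚ}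
    (hw : IsHullSlopes (psum η) n w) : IsSlopeSeq η (fun j => w j) := by
  obtain ⟨hanti, hge, htot, hdesc⟩ := hw
  refine ⟨fun i j hij => hanti i.isLt j.isLt hij, ?_, fun k hk => ?_, fun j h hlt => ?_⟩
  · rw [psum_natCast_eq_sum_range w le_rfl, htot]
  · rw [psum_natCast_eq_sum_range w hk]
    exact hge k hk
  · rw [psum_natCast_eq_sum_range w h.le]
    exact hdesc j h hlt

theorem exists_isSlopeSeq {n : ℕ} (η : Fin n → ℚ) : ∃ ν, IsSlopeSeq η ν :=
  let ⟨_, hw, _⟩ := exists_isHullSlopes n (psum η) (psum_zero η)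
  ⟨_, hw.isSlopeSeq⟩

namespace IsSlopeSeq

variable {n : ℕ} {η ν : Fin n → ℚ}

theorem psum_le_of_majorant (hν : IsSlopeSeq η ν) {u : Fin n → ℚ} (hu : Antitone u)
    (htot : psum ν n ≤ psum u n) (hle : ∀ k ≤ n, psum η k ≤ psum u k) :
    ∀ k ≤ n, psum ν k ≤ psum u k :=
  psum_le_of_descents hu htot fun j h hlt => (hν.2.2.2 j h hlt).trans_le (hle _ h.le)

theorem psum_le (hν : IsSlopeSeq η ν) {v : Fin n → ℚ} (htot : psum v n ≤ psum ν n)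
    (hdesc : ∀ j : Fin n, ∀ h : (j : ℕ) + 1 < n,
      v ⟨(j : ℕ) + 1, h⟩ < v j → psum v ((j : ℕ) + 1) ≤ psum η ((j : ℕ) + 1)) :
    ∀ k ≤ n, psum v k ≤ psum ν k :=
  psum_le_of_descents hν.1 htot fun j h hlt => (hdesc j h hlt).trans (hν.2.2.1 _ h.le)

theorem unique {ν' : Fin n → ℚ} (hν : IsSlopeSeq η ν) (hν' : IsSlopeSeq η ν') : ν = ν' :=
  eq_of_psum_eq fun k hk =>
    le_antisymm (hν.psum_le_of_majorant hν'.1 (by rw [hν.2.1, hν'.2.1]) hν'.2.2.1 k hk)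
      (hν'.psum_le_of_majorant hν.1 (by rw [hν.2.1, hν'.2.1]) hν.2.2.1 k hk)

end IsSlopeSeq

lemma chi_eq_floor_sub (m n : ℕ) (i : ℤ) :
    chi m n i = ⌊(i * m / n : ℚ)⌋ - ⌊((i - 1) * m / n : ℚ)⌋ := by
  simp only [chi, Int.fdiv_eq_ediv_of_nonneg _ (Int.natCast_nonneg n),
    ← Rat.floor_intCast_div_natCast]
  push_cast
  rfl

lemma sum_range_chi (m n k : ℕ) :
    ∑ i ∈ range k, chi m n ((i : ℤ) + 1) = ⌊(k * m / n : ℚ)⌋ := by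
  simp only [chi_eq_floor_sub]
  push_cast
  simp only [add_sub_cancel_right]
  have := sum_range_sub (fun i : ℕ => ⌊(i * m / n : ℚ)⌋) k
  push_cast at this
  simpa using this

def addChi (m n : ℕ) (μ : Fin n → ℤ) : Fin n → ℚ :=
  fun i => (μ i : ℚ) + (chi m n ((i : ℕ) + 1) : ℚ)

section

variable {m n : ℕ} {μ : Fin n → ℤ}

lemma psum_addChi {k : ℕ} (hk : k ≤ n) :
    psum (addChi m n μ) k = psum (fun i => (μ i : ℚ)) k + ⌊(k * m / n : ℚ)⌋ := by
  unfold addChi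
  rw [psum_add, psum_natCast_eq_sum_range (fun i => (chi m n ((i : ℤ) + 1) : ℚ)) hk,
    ← sum_range_chi, Int.cast_sum]

lemma psum_addChi_self (hn : n ≠ 0) :
    psum (addChi m n μ) n = psum (fun i => (μ i : ℚ)) n + m := by
  rw [psum_addChi le_rfl, mul_div_cancel_left₀ _ (by exact_mod_cast hn)]
  simp

lemma exists_psum_addChi_eq (k : ℕ) : ∃ z : ℤ, psum (addChi m n μ) k = z := by
  obtain ⟨z, hz⟩ := exists_psum_intCast_eq (fun i => μ i + chi m n ((i : ℕ) + 1)) k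
  refine ⟨z, hz ▸ ?_⟩
  unfold addChi
  push_cast
  rfl

variable {ν : Fin n → ℚ}

/-- The majorant `k ↦ ∑_{j ≤ k} μ_j + km/n` of `∑_{j ≤ k} η_j` is concave because `μ` is
dominant, so it also majorises the slope sequence. -/
theorem IsSlopeSeq.mem_Bset (hn : n ≠ 0) (hμ : Antitone μ)
    (hν : IsSlopeSeq (addChi m n μ) ν) : ν ∈ Bset m n μ := by
  have hnq : (n : ℚ) ≠ 0 := by exact_mod_cast hn
  set u : Fin n → ℚ := fun i => (μ i : ℚ) + m / n
  have hu : Antitone u := fun i j hij => by simpa [u] using hμ hij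
  have hpsum_u : ∀ k ≤ n, psum u k = psum (fun i => (μ i : ℚ)) k + k * m / n := by
    intro k hk
    rw [psum_add, psum_natCast_eq_sum_range (fun _ => (m / n : ℚ)) hk]
    simp [mul_div_assoc]
  have htot : psum ν n = psum (fun i => (μ i : ℚ)) n + m := by
    rw [hν.2.1, psum_addChi_self hn]
  refine ⟨hν.1, htot, fun k _ hk => ?_, fun j h hlt => ?_⟩
  · have hle := hν.psum_le_of_majorant hu
      (by rw [htot, hpsum_u n le_rfl, mul_div_cancel_left₀ _ hnq])
      (fun k hk => by
        rw [psum_addChi hk, hpsum_u k hk]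
        gcongr
        exact Int.floor_le _) k (by omega)
    rwa [hpsum_u k (by omega)] at hle
  · rw [hν.2.2.2 j h hlt]
    exact exists_psum_addChi_eq _

/-- At a descent of `v`, its partial sum is an integer below `∑_{j ≤ k} μ_j + km/n`, hence
below `∑_{j ≤ k} μ_j + ⌊km/n⌋ = ∑_{j ≤ k} η_j`. -/
theorem IsSlopeSeq.psum_le_of_mem_Bset (hn : n ≠ 0) (hν : IsSlopeSeq (addChi m n μ) ν)
    {v : Fin n → ℚ} (hv : v ∈ Bset m n μ) : ∀ k ≤ n, psum v k ≤ psum ν k := by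
  obtain ⟨-, hvtot, hvle, hvint⟩ := hv
  refine hν.psum_le (by rw [hvtot, hν.2.1, psum_addChi_self hn]) fun j h hlt => ?_
  obtain ⟨z, hz⟩ := hvint j h hlt
  obtain ⟨Z, hZ⟩ := exists_psum_intCast_eq μ ((j : ℕ) + 1)
  have hzZ : ((z - Z : ℤ) : ℚ) ≤ ((j : ℕ) + 1 : ℕ) * m / n := by
    have := hvle ((j : ℕ) + 1) (by omega) (by omega)
    rw [hz, hZ] at this
    push_cast at this ⊢
    linarith
  have hfloor : z ≤ Z + ⌊(((j : ℕ) + 1 : ℕ) : ℚ) * m / n⌋ := by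
    linarith [Int.le_floor.2 hzZ]
  rw [hz, psum_addChi h.le, hZ]
  exact_mod_cast hfloor

end

theorem slope_sequence_is_maximal_general (m n : ℕ) (hmn : m < n)
    (μ : Fin n → ℤ) (hμ : Antitone μ) :
    ∃ ν : Fin n → ℚ,
      IsSlopeSeq (fun i => (μ i : ℚ) + (chi m n ((i : ℕ) + 1) : ℚ)) ν ∧
      (∀ ν' : Fin n → ℚ,
        IsSlopeSeq (fun i => (μ i : ℚ) + (chi m n ((i : ℕ) + 1) : ℚ)) ν' → ν' = ν) ∧
      ν ∈ Bset m n μ ∧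
      (∀ v ∈ Bset m n μ, ∀ k : ℕ, 1 ≤ k → k ≤ n → psum v k ≤ psum ν k) := by
  have hn : n ≠ 0 := by omega
  obtain ⟨ν, hν⟩ := exists_isSlopeSeq (addChi m n μ)
  exact ⟨ν, hν, fun ν' hν' => hν'.unique hν, hν.mem_Bset hn hμ,
    fun v hv k _ hk => hν.psum_le_of_mem_Bset hn hv k hk⟩

/-- For coprime `0 < m < n` and dominant `μ ∈ ℤⁿ`, set
`η = μ + χ_{m,n}`. There is a unique slope sequence `ν` of `η`; moreover `ν ∈ B(μ,m,n)`
and `ν` is the greatest element of `B(μ,m,n)` for the dominance order. -/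
theorem slope_sequence_is_maximal (m n : ℕ) (hm : 0 < m) (hmn : m < n)
    (hcop : Nat.Coprime m n) (μ : Fin n → ℤ) (hμ : Antitone μ) :
    ∃ ν : Fin n → ℚ,
      IsSlopeSeq (fun i => (μ i : ℚ) + (chi m n ((i : ℕ) + 1) : ℚ)) ν ∧
      (∀ ν' : Fin n → ℚ,
        IsSlopeSeq (fun i => (μ i : ℚ) + (chi m n ((i : ℕ) + 1) : ℚ)) ν' → ν' = ν) ∧
      ν ∈ Bset m n μ ∧
      (∀ v ∈ Bset m n μ, ∀ k : ℕ, 1 ≤ k → k ≤ n → psum v k ≤ psum ν k) :=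
  slope_sequence_is_maximal_general m n hmn μ hμ
end

section
/- Let m and n be coprime integers with 1 < m < n, let (m', n') = f(m,n) with n' ≥ 1, and let T(0) = 0, T(i) = T(i−1) + len(B_{χ_{m',n'}(i)}) for i ∈ {1,…,n'} be the block boundaries. Then for all i, j ∈ {1,…,n'}: 𝐚^i_{χ_{m',n'}} <_lex 𝐚^j_{χ_{m',n'}} if and only if 𝐚^{T(i)}_{χ_{m,n}} <_lex 𝐚^{T(j)}_{χ_{m,n}}, where 𝐚^k_{χ} denotes the a-sequence of the periodic extension of χ. -/
/-- The Euclidean step `f(m,n)`. -/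
def euclStep (m n : ℕ) : ℕ × ℕ :=
  if 2 * m ≤ n then (m * (n / m + 1) - n, m) else (n - (n - m) * (n / (n - m)), n - m)

/-- The blocks `B₁, B₀` associated to `(m,n)`. -/
def block (m n : ℕ) (b : ℤ) : List ℤ :=
  if 2 * m ≤ n then
    if b = 1 then List.replicate (n / m - 1) 0 ++ [1] else List.replicate (n / m) 0 ++ [1]
  else
    if b = 1 then 0 :: List.replicate (n / (n - m)) 1
    else 0 :: List.replicate (n / (n - m) - 1) 1

/-- The block boundaries: `T(0) = 0` and `T(i) = T(i−1) + len(B_{χ_{m',n'}(i)})`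
where `(m', n') = f(m,n)`. -/
def Tb (m n : ℕ) (i : ℕ) : ℕ :=
  ∑ k ∈ Finset.range i,
    (block m n (chi (euclStep m n).1 (euclStep m n).2 ((k : ℤ) + 1))).length

/-- The a-sequence `𝐚^j_χ` of a (periodic) function `χ : ℤ → ℤ`: `𝐚^j_χ(k) = χ(j − k)`. -/
def aSeq (χ : ℤ → ℤ) (j : ℤ) : ℕ → ℤ := fun k => χ (j - k)

/-- Lexicographic order on sequences `ℕ → ℤ`. -/
def LexLt (f g : ℕ → ℤ) : Prop :=
  ∃ k₀ : ℕ, (∀ k < k₀, f k = g k) ∧ f k₀ < g k₀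

lemma fdiv_key (m n : ℕ) (hn : 0 < (n:ℤ)) (j K : ℤ) :
    (j*m).fdiv n - ((j-K)*m).fdiv n
      = (K*m).fdiv n + (if (j*m) % n < (K*m) % n then 1 else 0) := by
  have hs0 : 0 ≤ (j*m) % n := Int.emod_nonneg _ (by omega)
  have hs1 : (j*m) % n < n := Int.emod_lt_of_pos _ hn
  have ht0 : 0 ≤ (K*m) % n := Int.emod_nonneg _ (by omega)
  have ht1 : (K*m) % n < n := Int.emod_lt_of_pos _ hn
  have hu : ((j-K)*m) % n = (j*m) % n - (K*m) % n + (if (j*m) % n < (K*m) % n then (n:ℤ) else 0) := by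
    have h1 : ((j-K)*m) % n = ((j*m) % n - (K*m) % n) % n := by
      rw [← Int.sub_emod]; ring_nf
    rw [h1]
    split_ifs with hc
    · have h2 := Int.add_mul_emod_self_left ((j*m) % n - (K*m) % n) (n:ℤ) 1
      rw [mul_one] at h2
      rw [← h2, Int.emod_eq_of_lt (by omega) (by omega)]
    · rw [Int.emod_eq_of_lt (by omega) (by omega)]; ring
  rw [Int.fdiv_eq_ediv_of_nonneg _ (le_of_lt hn), Int.fdiv_eq_ediv_of_nonneg _ (le_of_lt hn),
      Int.fdiv_eq_ediv_of_nonneg _ (le_of_lt hn)]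
  have e1 := Int.mul_ediv_add_emod (j*m) n
  have e2 := Int.mul_ediv_add_emod ((j-K)*m) n
  have e3 := Int.mul_ediv_add_emod (K*m) n
  apply mul_left_cancel₀ (a := (n:ℤ)) (by omega)
  split_ifs at hu ⊢ with hc
  · linear_combination e1 - e2 - e3 + hu
  · linear_combination e1 - e2 - e3 + hu

lemma chi_eq (m n : ℕ) (hmn : m < n) (x : ℤ) :
    chi m n x = if (x * m) % n < m then 1 else 0 := by
  have hn : (0:ℤ) < n := by exact_mod_cast Nat.lt_of_le_of_lt (Nat.zero_le m) hmn
  have h := fdiv_key m n hn x 1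
  have h1 : ((1:ℤ)*m).fdiv n = 0 := by
    rw [Int.fdiv_eq_ediv_of_nonneg _ (le_of_lt hn), one_mul]
    exact Int.ediv_eq_zero_of_lt (by positivity) (by exact_mod_cast hmn)
  have h2 : ((1:ℤ)*m) % n = m := by
    rw [one_mul, Int.emod_eq_of_lt (by positivity) (by exact_mod_cast hmn)]
  rw [h1, h2, zero_add] at h
  simpa [chi] using h

lemma lexlt_iff (m n : ℕ) (hn : 0 < n) (hmn : m < n) (i j : ℤ) :
    LexLt (aSeq (chi m n) i) (aSeq (chi m n) j) ↔ (j*m) % n < (i*m) % n := by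
  have hnz : (0:ℤ) < n := by exact_mod_cast hn
  set D : ℕ → ℤ := fun K =>
    ((j*m).fdiv n - ((j-K)*m).fdiv n) - ((i*m).fdiv n - ((i-K)*m).fdiv n) with hD
  have hDval : ∀ K : ℕ, D K = (if (j*m) % n < ((K:ℤ)*m) % n then 1 else 0)
      - (if (i*m) % n < ((K:ℤ)*m) % n then 1 else 0) := by
    intro K
    simp only [hD]
    rw [fdiv_key m n hnz j K, fdiv_key m n hnz i K]
    ring
  have hjump : ∀ K : ℕ, aSeq (chi m n) j K - aSeq (chi m n) i K = D (K+1) - D K := by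
    intro K
    simp only [hD, aSeq, chi]
    push_cast
    ring_nf
  have hD0 : D 0 = 0 := by
    rw [hDval 0]
    simp only [Nat.cast_zero, zero_mul, Int.zero_emod]
    rw [if_neg (not_lt.mpr (Int.emod_nonneg _ hnz.ne')),
        if_neg (not_lt.mpr (Int.emod_nonneg _ hnz.ne'))]
    ring
  constructor
  · rintro ⟨k₀, heq, hlt⟩
    by_contra hrs
    push_neg at hrs
    have hDle : ∀ K : ℕ, D K ≤ 0 := by
      intro K
      have h := hDval K
      split_ifs at h <;> omega
    have hz : ∀ K, K ≤ k₀ → D K = 0 := by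
      intro K
      induction K with
      | zero => intro _; exact hD0
      | succ K ih =>
        intro hK
        have h1 := hjump K
        have h2 := heq K (by omega)
        have h3 := ih (by omega)
        rw [h2] at h1
        omega
    have h1 := hjump k₀
    have h2 := hz k₀ le_rfl
    have h3 := hDle (k₀ + 1)
    omega
  · intro hsr
    set K0 : ℕ := (i % n).toNat with hK0
    have htK0 : ((K0:ℤ)*m) % n = (i*m) % n := by
      have h1 : (K0:ℤ) = i % n := Int.toNat_of_nonneg (Int.emod_nonneg _ (by omega))
      rw [h1]
      conv_rhs => rw [Int.mul_emod]
      rw [Int.mul_emod, Int.emod_emod_of_dvd _ dvd_rfl]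
    have hex : ∃ K, D K ≠ 0 := by
      refine ⟨K0, ?_⟩
      rw [hDval K0, htK0, if_pos hsr, if_neg (lt_irrefl _)]
      omega
    classical
    set K1 := Nat.find hex with hK1
    have hK1ne : D K1 ≠ 0 := Nat.find_spec hex
    have hmin : ∀ K < K1, D K = 0 := fun K hK => not_not.mp (Nat.find_min hex hK)
    have hK1pos : 1 ≤ K1 := by
      rcases Nat.eq_zero_or_pos K1 with h | h
      · rw [h] at hK1ne; exact absurd hD0 hK1ne
      · omega
    have hDK1 : D K1 = 1 := by
      have h := hDval K1
      split_ifs at h with h1 h2 <;> omega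
    refine ⟨K1 - 1, ?_, ?_⟩
    · intro k hk
      have h1 := hjump k
      have h2 := hmin k (by omega)
      have h3 := hmin (k+1) (by omega)
      omega
    · have h1 := hjump (K1 - 1)
      have h2 := hmin (K1 - 1) (by omega)
      have h3 : K1 - 1 + 1 = K1 := by omega
      rw [h3] at h1
      omega


lemma sum_chi (m n : ℕ) (hn : 0 < n) (i : ℕ) :
    ∑ k ∈ Finset.range i, chi m n ((k:ℤ) + 1) = ((i:ℤ) * m).fdiv n := by
  have h : ∀ k ∈ Finset.range i, chi m n ((k:ℤ)+1)
      = (fun k : ℕ => (((k:ℕ):ℤ) * m).fdiv n) (k+1) - (fun k : ℕ => (((k:ℕ):ℤ) * m).fdiv n) k := by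
    intro k _
    simp only [chi]
    push_cast
    ring_nf
  rw [Finset.sum_congr rfl h, Finset.sum_range_sub (fun k : ℕ => (((k:ℕ):ℤ) * m).fdiv n) i]
  simp

lemma case1 (m n : ℕ) (hm : 1 < m) (hmn : m < n) (hcop : Nat.Coprime m n) (h : 2*m ≤ n) :
    0 < (euclStep m n).2 ∧ (euclStep m n).1 < (euclStep m n).2 ∧
    ∀ i : ℕ, ((Tb m n i : ℤ) * m) % n = ((i:ℤ) * (euclStep m n).1) % ((euclStep m n).2 : ℤ) := by
  have he : euclStep m n = (m * (n / m + 1) - n, m) := by simp [euclStep, h]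
  set q := n / m with hq
  set m' := m * (q + 1) - n with hm'
  have hm0 : 0 < m := by omega
  have hdm := Nat.div_add_mod n m
  have hmodlt : n % m < m := Nat.mod_lt _ hm0
  have hmodpos : 0 < n % m := by
    rcases Nat.eq_zero_or_pos (n % m) with h0 | h0
    · exact absurd (hcop.eq_one_of_dvd (Nat.dvd_of_mod_eq_zero h0)) (by omega)
    · exact h0
  have hle : n ≤ m * (q + 1) := le_of_lt (Nat.lt_mul_div_succ n hm0)
  have hm'c : (m' : ℤ) = m * ((q:ℤ) + 1) - n := by
    rw [hm', Nat.cast_sub hle]; push_cast; ring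
  have hdmz : (m:ℤ) * q + ((n % m : ℕ):ℤ) = n := by exact_mod_cast hdm
  have hm'lt : (m':ℤ) < m := by
    rw [hm'c]
    have : (0:ℤ) < ((n % m : ℕ):ℤ) := by exact_mod_cast hmodpos
    linarith
  have hm'ltn : m' < m := by exact_mod_cast hm'lt
  have hq1 : 1 ≤ q := (Nat.one_le_div_iff hm0).mpr hmn.le
  have hlen : ∀ x : ℤ, ((block m n (chi m' m x)).length : ℤ) = (q:ℤ) + 1 - chi m' m x := by
    intro x
    have h01 : chi m' m x = 0 ∨ chi m' m x = 1 := by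
      rw [chi_eq m' m hm'ltn x]; split_ifs <;> simp
    rcases h01 with h0 | h0 <;> rw [h0] <;> simp [block, h, ← hq] <;>
      push_cast [Nat.cast_sub hq1] <;> ring
  refine ⟨by rw [he]; exact hm0, by rw [he]; exact_mod_cast hm'lt, ?_⟩
  intro i
  have hTbi : (Tb m n i : ℤ) = (i:ℤ) * ((q:ℤ) + 1) - ((i:ℤ) * m').fdiv m := by
    rw [Tb, he]
    push_cast
    simp only [hlen]
    rw [Finset.sum_sub_distrib, sum_chi m' m hm0 i]
    simp [mul_comm]
  rw [he]
  dsimp only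
  have hfd : ((i:ℤ) * m').fdiv m = ((i:ℤ) * m') / m := Int.fdiv_eq_ediv_of_nonneg _ (by positivity)
  have hE := Int.mul_ediv_add_emod ((i:ℤ) * m') m
  have he0 : 0 ≤ ((i:ℤ) * m') % m := Int.emod_nonneg _ (by exact_mod_cast hm0.ne')
  have he1 : ((i:ℤ) * m') % m < m := Int.emod_lt_of_pos _ (by exact_mod_cast hm0)
  have hmain : (Tb m n i : ℤ) * m = ((i:ℤ) * m') % m + (n:ℤ) * i := by
    rw [hTbi, hfd]
    linear_combination -hE - (i:ℤ) * hm'c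
  rw [hmain, Int.add_mul_emod_self_left, Int.emod_eq_of_lt he0 (lt_trans he1 (by exact_mod_cast hmn))]

lemma case2 (m n : ℕ) (hm : 1 < m) (hmn : m < n) (h : ¬ 2*m ≤ n) :
    0 < (euclStep m n).2 ∧ (euclStep m n).1 < (euclStep m n).2 ∧
    ∀ i : ℕ, ((Tb m n i : ℤ) * m) % n = ((i:ℤ) * (euclStep m n).1) % ((euclStep m n).2 : ℤ) := by
  have he : euclStep m n = (n - (n - m) * (n / (n - m)), n - m) := by simp [euclStep, h]
  set n' := n - m with hn'
  set q := n / n' with hq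
  set m' := n - n' * q with hm'
  have hn'0 : 0 < n' := by omega
  have hn'c : (n' : ℤ) = (n:ℤ) - m := by rw [hn', Nat.cast_sub hmn.le]
  have hle : n' * q ≤ n := by rw [mul_comm]; exact Nat.div_mul_le_self n n'
  have hlt : n < n' * (q + 1) := Nat.lt_mul_div_succ n hn'0
  have hm'c : (m' : ℤ) = (n:ℤ) - (n':ℤ) * q := by
    rw [hm', Nat.cast_sub hle]; push_cast; ring
  have hltz : (n:ℤ) < (n':ℤ) * ((q:ℤ) + 1) := by exact_mod_cast hlt
  have hlez : (n':ℤ) * q ≤ n := by exact_mod_cast hle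
  have hm'lt : (m':ℤ) < n' := by rw [hm'c]; nlinarith [hltz]
  have hm'ltn : m' < n' := by exact_mod_cast hm'lt
  have hq1 : 1 ≤ q := (Nat.one_le_div_iff hn'0).mpr (by omega)
  have hlen : ∀ x : ℤ, ((block m n (chi m' n' x)).length : ℤ) = (q:ℤ) + chi m' n' x := by
    intro x
    have h01 : chi m' n' x = 0 ∨ chi m' n' x = 1 := by
      rw [chi_eq m' n' hm'ltn x]; split_ifs <;> simp
    rcases h01 with h0 | h0 <;> rw [h0] <;> simp [block, h, ← hq, ← hn'] <;>
      push_cast [Nat.cast_sub hq1] <;> ring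
  refine ⟨by rw [he]; exact hn'0, by rw [he]; exact_mod_cast hm'lt, ?_⟩
  intro i
  have hTbi : (Tb m n i : ℤ) = (i:ℤ) * (q:ℤ) + ((i:ℤ) * m').fdiv n' := by
    rw [Tb, he]
    push_cast
    simp only [hlen]
    rw [Finset.sum_add_distrib, sum_chi m' n' hn'0 i]
    simp [mul_comm]
  rw [he]
  dsimp only
  have hfd : ((i:ℤ) * m').fdiv n' = ((i:ℤ) * m') / n' := Int.fdiv_eq_ediv_of_nonneg _ (by positivity)
  have hE := Int.mul_ediv_add_emod ((i:ℤ) * m') n'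
  have he0 : 0 ≤ ((i:ℤ) * m') % n' := Int.emod_nonneg _ (by exact_mod_cast hn'0.ne')
  have he1 : ((i:ℤ) * m') % n' < n' := Int.emod_lt_of_pos _ (by exact_mod_cast hn'0)
  have hmain : (Tb m n i : ℤ) * m = ((i:ℤ) * m') % n'
      + (n:ℤ) * ((i:ℤ) * ((q:ℤ) - 1) + ((i:ℤ) * m') / n') := by
    rw [hTbi, hfd]
    linear_combination -hE - (i:ℤ) * hm'c + (((i:ℤ) * m') / n' + (i:ℤ) * q) * hn'c
  rw [hmain, Int.add_mul_emod_self_left,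
      Int.emod_eq_of_lt he0 (lt_of_lt_of_le he1 (by rw [hn'c]; omega))]

/-- For coprime `1 < m < n` with `(m', n') = f(m,n)` and block
boundaries `T`: for all `i, j ∈ {1,…,n'}`,
`𝐚^i_{χ_{m',n'}} <_lex 𝐚^j_{χ_{m',n'}}` iff `𝐚^{T(i)}_{χ_{m,n}} <_lex 𝐚^{T(j)}_{χ_{m,n}}`. -/
theorem aSeq_boundary_compat (m n : ℕ) (hm : 1 < m) (hmn : m < n)
    (hcop : Nat.Coprime m n) :
    ∀ i j : ℕ, 1 ≤ i → i ≤ (euclStep m n).2 → 1 ≤ j → j ≤ (euclStep m n).2 →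
      (LexLt (aSeq (chi (euclStep m n).1 (euclStep m n).2) (i : ℤ))
             (aSeq (chi (euclStep m n).1 (euclStep m n).2) (j : ℤ)) ↔
       LexLt (aSeq (chi m n) ((Tb m n i : ℕ) : ℤ))
             (aSeq (chi m n) ((Tb m n j : ℕ) : ℤ))) := by
  intro i j _ _ _ _
  have hn0 : 0 < n := by omega
  obtain ⟨hpos, hlt, hid⟩ :
      0 < (euclStep m n).2 ∧ (euclStep m n).1 < (euclStep m n).2 ∧
      ∀ k : ℕ, ((Tb m n k : ℤ) * m) % n
        = ((k:ℤ) * (euclStep m n).1) % ((euclStep m n).2 : ℤ) := by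
    by_cases h : 2 * m ≤ n
    · exact case1 m n hm hmn hcop h
    · exact case2 m n hm hmn h
  rw [lexlt_iff _ _ hpos hlt, lexlt_iff m n hn0 hmn, hid i, hid j]
end
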